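/- For each r ≥ 3, let Y_r be the truncation to rank r of the parallel connection, across a basepoint p, of two r-element circuits. Then Y_r is not laminar, but every single-element deletion and every single-element contraction of Y_r is laminar. That is, Y_r is an excluded minor for the class of laminar matroids. -/

import Mathlib

open Set Matroid

variable {α : Type*}

/-- A circuit: a minimal dependent set. -/
def Matroid.IsCircuit' (M : Matroid α) (C : Set α) : Prop :=
  M.Dep C ∧ ∀ D, D ⊂ C → M.Indep D

/-- The circuit characterization of laminar matroids. -/
def Matroid.IsLaminar (M : Matroid α) : Prop :=
  ∀ C₁ C₂, M.IsCircuit' C₁ → M.IsCircuit' C₂ → (C₁ ∩ C₂).Nonempty →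
    M.closure C₁ ⊆ M.closure C₂ ∨ M.closure C₂ ⊆ M.closure C₁

/-- A laminar family: any two intersecting members are comparable. -/
def IsLaminarFamily (𝒜 : Set (Set α)) : Prop :=
  ∀ A ∈ 𝒜, ∀ B ∈ 𝒜, (A ∩ B).Nonempty → A ⊆ B ∨ B ⊆ A

/-- `M` is presented by the laminar family `𝒜` with capacities `c`. -/
def Matroid.IsLaminarPresBy (M : Matroid α) (E : Set α) (𝒜 : Set (Set α)) (c : Set α → ℕ) :
    Prop :=
  M.E = E ∧ ∀ I, M.Indep I ↔ I ⊆ E ∧ ∀ A ∈ 𝒜, (I ∩ A).ncard ≤ c A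

/-- `M` has some laminar presentation (on its own ground set); this captures being
isomorphic to a laminar matroid `M(E, 𝒜, c)`. -/
def Matroid.HasLaminarPres (M : Matroid α) : Prop :=
  ∃ (𝒜 : Set (Set α)) (c : Set α → ℕ), IsLaminarFamily 𝒜 ∧ (∀ A ∈ 𝒜, A ⊆ M.E) ∧
    M.IsLaminarPresBy M.E 𝒜 c

/-- Deletion of a set of elements. -/
def Matroid.del (M : Matroid α) (X : Set α) : Matroid α := M ↾ (M.E \ X)

/-- Contraction of a set of elements, defined via duality. -/
def Matroid.con (M : Matroid α) (X : Set α) : Matroid α := (M✶ ↾ (M.E \ X))✶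

/-- `IsMinor M N` means `N` is obtained from `M` by a sequence of single-element
deletions and contractions. -/
inductive IsMinor : Matroid α → Matroid α → Prop
  | refl (M : Matroid α) : IsMinor M M
  | del (M N : Matroid α) (e : α) : IsMinor M N → IsMinor M (N.del {e})
  | con (M N : Matroid α) (e : α) : IsMinor M N → IsMinor M (N.con {e})

/-- `YrSpec N r C₁ C₂` says that `N` is (isomorphic to) the matroid `Y_r`: the truncation
to rank `r` of the parallel connection of the two `r`-element circuits `C₁` and `C₂`,
which meet in a single basepoint. -/
def YrSpec (N : Matroid α) (r : ℕ) (C₁ C₂ : Set α) : Prop :=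
  C₁.Finite ∧ C₂.Finite ∧ C₁.ncard = r ∧ C₂.ncard = r ∧ (C₁ ∩ C₂).ncard = 1 ∧
  N.E = C₁ ∪ C₂ ∧
  ∀ I, N.Indep I ↔ I ⊆ C₁ ∪ C₂ ∧ I.ncard ≤ r ∧ ¬ C₁ ⊆ I ∧ ¬ C₂ ⊆ I


/-!
In `Y_r` the circuits `C₁` and `C₂` meet in the basepoint, yet neither closure contains the other:
if `y ∈ C₂ \ C₁` and `x ∈ C₁ \ C₂`, then `insert x (C₂ \ {y})` has `r` elements and contains
neither circuit, so `x ∉ cl (C₂ \ {y}) = cl C₂`.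

After deleting or contracting an element `e`, the independent sets are the sets of size at most
`k` (`k = r`, resp. `r - 1`) containing no member of `𝒟 = {C₁, C₂}`, resp. `{C₁ \ {e}, C₂ \ {e}}`.
In such a matroid a circuit of size greater than `k` is spanning, and a circuit of size at most `k`
is a member of `𝒟`. Two members of `𝒟` that are small enough to be circuits are disjoint
(both survive only in the contraction by the basepoint), so two intersecting circuits are equal or
one of them spans; this is laminarity.
-/

lemma Set.pairwiseDisjoint_sep_pair {A B : Set α} {P : Set α → Prop}
    (h : P A → P B → Disjoint A B) : {D ∈ ({A, B} : Set (Set α)) | P D}.PairwiseDisjoint id := by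
  rintro D ⟨hD, hPD⟩ D' ⟨hD', hPD'⟩ hne
  rcases hD with rfl | rfl <;> rcases hD' with rfl | rfl
  · exact absurd rfl hne
  · exact h hPD hPD'
  · exact (h hPD' hPD).symm
  · exact absurd rfl hne

namespace Matroid

variable {M : Matroid α} {C : Set α} {k : ℕ} {𝒟 : Set (Set α)}

lemma isCircuit'_iff : M.IsCircuit' C ↔ M.IsCircuit C := by
  rw [isCircuit_iff_forall_ssubset, IsCircuit']

lemma isLaminar_of_isCircuit_eq
    (h : ∀ C C', M.IsCircuit C → M.IsCircuit C' → (C ∩ C').Nonempty →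
      M.closure C ≠ M.E → M.closure C' ≠ M.E → C = C') :
    M.IsLaminar := by
  intro C C' hC hC' hCC'
  rw [isCircuit'_iff] at hC hC'
  by_cases hsp : M.closure C = M.E
  · exact Or.inr (hsp ▸ M.closure_subset_ground C')
  by_cases hsp' : M.closure C' = M.E
  · exact Or.inl (hsp' ▸ M.closure_subset_ground C)
  exact Or.inl (h C C' hC hC' hCC' hsp hsp' ▸ subset_rfl)

lemma IsCircuit.closure_eq_ground_of_lt_ncard (hk : ∀ I, M.Indep I → I.ncard ≤ k)
    (hC : M.IsCircuit C) (hkC : k < C.ncard) : M.closure C = M.E := by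
  obtain ⟨I, hIC, hIk⟩ := exists_subset_card_eq hkC.le
  have hIfin : I.Finite := (finite_of_ncard_pos (by omega)).subset hIC
  have hI : M.Indep I := hC.ssubset_indep (hIC.ssubset_of_ne (by rintro rfl; omega))
  refine (M.closure_subset_ground C).antisymm fun x hx ↦ M.closure_subset_closure hIC ?_
  by_contra hxI
  have hxI' : x ∉ I := fun h ↦ hxI (M.subset_closure I hI.subset_ground h)
  have hins := hk _ ((hI.insert_indep_iff_of_notMem hxI').2 ⟨hx, hxI⟩)
  rw [ncard_insert_of_notMem hxI' hIfin] at hins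
  omega

lemma IsCircuit.mem_of_ncard_le
    (hI : ∀ I, M.Indep I ↔ I ⊆ M.E ∧ I.ncard ≤ k ∧ ∀ D ∈ 𝒟, ¬ D ⊆ I)
    (hC : M.IsCircuit C) (hCk : C.ncard ≤ k) : C ∈ 𝒟 := by
  obtain ⟨D, hD, hDC⟩ : ∃ D ∈ 𝒟, D ⊆ C := by
    by_contra! h
    exact hC.not_indep ((hI C).2 ⟨hC.subset_ground, hCk, h⟩)
  have hDdep : ¬ M.Indep D := fun h ↦ ((hI D).1 h).2.2 D hD subset_rfl
  rwa [← hC.eq_of_not_indep_subset hDdep hDC]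

lemma isLaminar_of_indep_iff
    (hI : ∀ I, M.Indep I ↔ I ⊆ M.E ∧ I.ncard ≤ k ∧ ∀ D ∈ 𝒟, ¬ D ⊆ I)
    (h𝒟 : {D ∈ 𝒟 | D ⊆ M.E ∧ D.ncard ≤ k}.PairwiseDisjoint id) :
    M.IsLaminar := by
  have hk : ∀ I, M.Indep I → I.ncard ≤ k := fun I h ↦ ((hI I).1 h).2.1
  have hsmall : ∀ C, M.IsCircuit C → M.closure C ≠ M.E →
      C ∈ {D ∈ 𝒟 | D ⊆ M.E ∧ D.ncard ≤ k} := fun C hC hsp ↦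
    have hCk : C.ncard ≤ k := not_lt.1 (mt (hC.closure_eq_ground_of_lt_ncard hk) hsp)
    ⟨hC.mem_of_ncard_le hI hCk, hC.subset_ground, hCk⟩
  refine isLaminar_of_isCircuit_eq fun C C' hC hC' hCC' hsp hsp' ↦ ?_
  exact h𝒟.elim (hsmall C hC hsp) (hsmall C' hC' hsp') (not_disjoint_iff_nonempty_inter.2 hCC')

end Matroid

namespace YrSpec

variable {N : Matroid α} {r : ℕ} {C₁ C₂ : Set α}

lemma symm (hY : YrSpec N r C₁ C₂) : YrSpec N r C₂ C₁ := by
  obtain ⟨hf₁, hf₂, hc₁, hc₂, hcap, hE, hI⟩ := hY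
  refine ⟨hf₂, hf₁, hc₂, hc₁, by rwa [inter_comm], by rwa [union_comm], fun I ↦ ?_⟩
  rw [hI I, union_comm]
  tauto

lemma ground_finite (hY : YrSpec N r C₁ C₂) : N.E.Finite := by
  obtain ⟨hf₁, hf₂, -, -, -, hE, -⟩ := hY
  exact hE ▸ hf₁.union hf₂

lemma ncard_diff (hY : YrSpec N r C₁ C₂) : (C₁ \ C₂).ncard = r - 1 := by
  obtain ⟨hf₁, -, hc₁, -, hcap, -⟩ := hY
  have := ncard_inter_add_ncard_sdiff_eq_ncard C₁ C₂ hf₁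
  omega

lemma eq_singleton_of_mem_inter (hY : YrSpec N r C₁ C₂) {e : α} (he : e ∈ C₁ ∩ C₂) :
    C₁ ∩ C₂ = {e} := by
  obtain ⟨-, -, -, -, hcap, -⟩ := hY
  obtain ⟨p, hp⟩ := ncard_eq_one.1 hcap
  rw [hp] at he ⊢
  rw [mem_singleton_iff.1 he]

lemma isCircuit_left (hr : 2 ≤ r) (hY : YrSpec N r C₁ C₂) : N.IsCircuit C₁ := by
  obtain ⟨hf₁, -, hc₁, hc₂, hcap, hE, hI⟩ := hY
  refine isCircuit_iff_forall_ssubset.2 ⟨⟨fun h ↦ ((hI C₁).1 h).2.2.1 subset_rfl,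
    hE ▸ subset_union_left⟩, fun J hJ ↦ (hI J).2 ⟨hJ.subset.trans subset_union_left, ?_,
    hJ.not_subset, fun h ↦ ?_⟩⟩
  · have := ncard_lt_ncard hJ hf₁
    omega
  · rw [inter_eq_right.2 (h.trans hJ.subset)] at hcap
    omega

lemma closure_left_not_subset (hr : 3 ≤ r) (hY : YrSpec N r C₁ C₂) :
    ¬ N.closure C₁ ⊆ N.closure C₂ := by
  obtain ⟨y, hy⟩ : (C₂ \ C₁).Nonempty :=
    nonempty_of_ncard_ne_zero (by rw [hY.symm.ncard_diff]; omega)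
  obtain ⟨x, hx⟩ : (C₁ \ C₂).Nonempty := nonempty_of_ncard_ne_zero (by rw [hY.ncard_diff]; omega)
  obtain ⟨z, hz, hzx⟩ := exists_ne_of_one_lt_ncard (by rw [hY.ncard_diff]; omega) x
  have hC₂ := hY.symm.isCircuit_left (by omega)
  have hI := hC₂.sdiff_singleton_indep hy.1
  obtain ⟨-, -, -, hc₂, -, hE, hYI⟩ := hY
  have hxI : x ∉ C₂ \ {y} := fun h ↦ hx.2 h.1
  have hxE : x ∈ N.E := hE ▸ Or.inl hx.1
  have hins : N.Indep (insert x (C₂ \ {y})) := by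
    refine (hYI _).2 ⟨insert_subset (Or.inl hx.1) (sdiff_subset.trans subset_union_right), ?_,
      fun h ↦ ?_, fun h ↦ ?_⟩
    · have := ncard_insert_le x (C₂ \ {y})
      rw [ncard_sdiff_singleton_of_mem hy.1, hc₂] at this
      omega
    · exact (h hz.1).elim hzx fun h' ↦ hz.2 h'.1
    · exact (h hy.1).elim (fun h' ↦ hx.2 (h' ▸ hy.1)) fun h' ↦ h'.2 rfl
  rw [← hC₂.closure_sdiff_singleton_eq y]
  exact fun h ↦ (hI.notMem_closure_iff_of_notMem hxI hxE).2 hins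
    (h (N.subset_closure C₁ (hE ▸ subset_union_left) hx.1))

lemma not_isLaminar (hr : 3 ≤ r) (hY : YrSpec N r C₁ C₂) : ¬ N.IsLaminar := by
  obtain ⟨p, hp⟩ : (C₁ ∩ C₂).Nonempty := nonempty_of_ncard_ne_zero (by rw [hY.2.2.2.2.1]; omega)
  intro hlam
  rcases hlam C₁ C₂ (isCircuit'_iff.2 (hY.isCircuit_left (by omega)))
    (isCircuit'_iff.2 (hY.symm.isCircuit_left (by omega))) ⟨p, hp⟩ with h | h
  · exact hY.closure_left_not_subset hr h
  · exact hY.symm.closure_left_not_subset hr h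

/- `N.del {e}` and `N.con {e}` unfold to Mathlib's `N ＼ {e}` and `N ／ {e}`, so the Mathlib API
applies to them. -/
lemma delete_indep_iff (hY : YrSpec N r C₁ C₂) (e : α) (I : Set α) :
    (N ＼ {e}).Indep I ↔
      I ⊆ (N ＼ {e}).E ∧ I.ncard ≤ r ∧ ∀ D ∈ ({C₁, C₂} : Set (Set α)), ¬ D ⊆ I := by
  obtain ⟨-, -, -, -, -, hE, hI⟩ := hY
  simp only [Matroid.delete_indep_iff, delete_ground, hI, hE, subset_sdiff, mem_insert_iff,
    mem_singleton_iff, forall_eq_or_imp, forall_eq]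
  tauto

lemma isLaminar_delete (hY : YrSpec N r C₁ C₂) {e : α} (he : e ∈ N.E) :
    (N.del {e}).IsLaminar := by
  refine isLaminar_of_indep_iff (hY.delete_indep_iff e) (pairwiseDisjoint_sep_pair ?_)
  obtain ⟨-, -, -, -, -, hE, -⟩ := hY
  rintro ⟨h₁, -⟩ ⟨h₂, -⟩
  rw [hE] at he
  exact absurd rfl (he.elim (fun h ↦ (h₁ h).2) fun h ↦ (h₂ h).2)

lemma indep_singleton (hr : 2 ≤ r) (hY : YrSpec N r C₁ C₂) {e : α} (he : e ∈ N.E) :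
    N.Indep {e} := by
  obtain ⟨-, -, hc₁, hc₂, -, hE, hI⟩ := hY
  refine (hI {e}).2 ⟨hE ▸ singleton_subset_iff.2 he, by rw [ncard_singleton]; omega,
    fun h ↦ ?_, fun h ↦ ?_⟩
  · have := ncard_le_ncard h
    rw [ncard_singleton] at this
    omega
  · have := ncard_le_ncard h
    rw [ncard_singleton] at this
    omega

lemma contract_indep_iff (hr : 2 ≤ r) (hY : YrSpec N r C₁ C₂) {e : α} (he : e ∈ N.E)
    (I : Set α) :
    (N ／ {e}).Indep I ↔
      I ⊆ (N ／ {e}).E ∧ I.ncard ≤ r - 1 ∧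
        ∀ D ∈ ({C₁ \ {e}, C₂ \ {e}} : Set (Set α)), ¬ D ⊆ I := by
  have hfin := hY.ground_finite
  have he_indep := hY.indep_singleton hr he
  obtain ⟨-, -, -, -, -, hE, hYI⟩ := hY
  simp only [he_indep.contract_indep_iff, contract_ground, union_singleton, hYI,
    disjoint_singleton_right, subset_sdiff, insert_subset_iff, ← hE, mem_insert_iff,
    mem_singleton_iff, forall_eq_or_imp, forall_eq, sdiff_singleton_subset_iff]
  constructor
  · rintro ⟨heI, ⟨-, hIE⟩, hcard, h₁, h₂⟩
    rw [ncard_insert_of_notMem heI (hfin.subset hIE)] at hcard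
    exact ⟨⟨hIE, heI⟩, by omega, h₁, h₂⟩
  · rintro ⟨⟨hIE, heI⟩, hcard, h₁, h₂⟩
    rw [ncard_insert_of_notMem heI (hfin.subset hIE)]
    exact ⟨heI, ⟨he, hIE⟩, by omega, h₁, h₂⟩

lemma isLaminar_contract (hr : 2 ≤ r) (hY : YrSpec N r C₁ C₂) {e : α} (he : e ∈ N.E) :
    (N.con {e}).IsLaminar := by
  refine isLaminar_of_indep_iff (hY.contract_indep_iff hr he) (pairwiseDisjoint_sep_pair ?_)
  have hmem : ∀ {C : Set α}, C.ncard = r → (C \ {e}).ncard ≤ r - 1 → e ∈ C := fun hC h ↦ by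
    by_contra heC
    rw [sdiff_singleton_eq_self heC] at h
    omega
  rintro ⟨-, h₁⟩ ⟨-, h₂⟩
  have hinter := hY.eq_singleton_of_mem_inter ⟨hmem hY.2.2.1 h₁, hmem hY.2.2.2.1 h₂⟩
  refine disjoint_left.2 fun x hx₁ hx₂ ↦ hx₁.2 ?_
  rw [← hinter]
  exact ⟨hx₁.1, hx₂.1⟩

end YrSpec

theorem stmt_15 (N : Matroid α) (r : ℕ) (hr : 3 ≤ r) (C₁ C₂ : Set α)
    (hY : YrSpec N r C₁ C₂) :
    ¬ N.IsLaminar ∧ ∀ e ∈ N.E, (N.del {e}).IsLaminar ∧ (N.con {e}).IsLaminar :=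
  ⟨hY.not_isLaminar hr, fun _ he ↦
    ⟨hY.isLaminar_delete he, hY.isLaminar_contract (by omega) he⟩⟩
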